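/- arXiv:2512.14570 — 3 statements merged into one kernel-verified Lean document; each statement's English description precedes it below -/
import Mathlib

section
/- Let T = [a, b] with a < b be a real interval and let p, n be integers with −1 ≤ n ≤ p. Then for every polynomial ξ ∈ ℙ_p(T), the function θ := ξ − Π_T^n ξ satisfies |θ(a)|² ≤ ((p−n)(p+n+2)/(b−a)) · ‖θ‖²_{L²(T)}. -/
/-!
Expand `θ` in the Legendre polynomials of `[a, b]`, given by Rodrigues' formula
`L k = D^k ((X - a)(X - b))^k`. Since `deg θ ≤ p` and `θ ⟂ ℙ_n`, only `n < k ≤ p` occur.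
Integrating by parts `k` times gives `‖L k‖² = (k!)² (b - a)^(2k+1) / (2k + 1)`, while
`L k (a) = k! (a - b)^k`, so `L k (a)² = (2k + 1) / (b - a) · ‖L k‖²`. Cauchy–Schwarz
applied to `θ(a) = ∑ c_k L k (a)` then bounds `θ(a)²` by
`∑_{k=n+1}^{p} (2k + 1) / (b - a) · ‖θ‖²`, and this sum of odd numbers is
`(p + 1)² - (n + 1)² = (p - n)(p + n + 2)`.
-/

open MeasureTheory Polynomial Finset intervalIntegral
open scoped Nat

theorem Finset.sum_Ico_two_mul_add_one {R : Type*} [CommRing R] {m N : ℕ} (h : m ≤ N) :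
    ∑ k ∈ Ico m N, (2 * k + 1 : R) = N ^ 2 - m ^ 2 := by
  have hrange (N : ℕ) : ∑ k ∈ range N, (2 * k + 1 : R) = N ^ 2 := by
    induction N with
    | zero => simp
    | succ N ih => rw [sum_range_succ, ih]; push_cast; ring
  rw [sum_Ico_eq_sub _ h, hrange, hrange]

namespace Polynomial

theorem iterate_derivative_eq_C_of_natDegree_le {R : Type*} [Semiring R] {p : R[X]} {n : ℕ}
    (hp : p.natDegree ≤ n) :
    derivative^[n] p = C (n ! * p.coeff n) := by
  rw [eq_C_of_natDegree_le_zero ((natDegree_iterate_derivative p n).trans (by omega)),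
    coeff_iterate_derivative, zero_add, Nat.descFactorial_self, nsmul_eq_mul]

section CommRing

variable {R : Type*} [CommRing R]

theorem isRoot_iterate_derivative_of_pow_dvd {p : R[X]} {t : R} {j k : ℕ}
    (hp : (X - C t) ^ k ∣ p) (hj : j < k) : (derivative^[j] p).IsRoot t :=
  dvd_iff_isRoot.mp <| (dvd_pow_self _ (Nat.sub_ne_zero_of_lt hj)).trans
    (pow_sub_dvd_iterate_derivative_of_pow_dvd _ hp)

theorem eval_iterate_derivative_X_sub_C_pow_mul (t : R) (k : ℕ) (q : R[X]) :
    (derivative^[k] ((X - C t) ^ k * q)).eval t = k ! * q.eval t := by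
  rw [iterate_derivative_mul, eval_finsetSum, sum_eq_single_of_mem _ (mem_range.mpr k.succ_pos)]
  · simp [iterate_derivative_X_sub_pow_self]
  · intro i hi hi0
    rw [iterate_derivative_X_sub_pow, Nat.sub_sub_self (mem_range_succ_iff.mp hi)]
    simp [zero_pow hi0]

end CommRing

theorem intervalIntegrable_eval_mul_eval (f g : ℝ[X]) (a b : ℝ) :
    IntervalIntegrable (fun x => f.eval x * g.eval x) volume a b :=
  (f.continuous.mul g.continuous).intervalIntegrable a b

noncomputable def l2Pairing (a b : ℝ) : ℝ[X] →ₗ[ℝ] ℝ[X] →ₗ[ℝ] ℝ :=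
  LinearMap.mk₂ ℝ (fun f g => ∫ x in a..b, f.eval x * g.eval x)
    (fun f₁ f₂ g => by
      simp only [eval_add, add_mul]
      exact integral_add (intervalIntegrable_eval_mul_eval _ _ a b)
        (intervalIntegrable_eval_mul_eval _ _ a b))
    (fun c f g => by
      simp only [eval_smul, smul_eq_mul, mul_assoc, intervalIntegral.integral_const_mul])
    (fun f g₁ g₂ => by
      simp only [eval_add, mul_add]
      exact integral_add (intervalIntegrable_eval_mul_eval _ _ a b)
        (intervalIntegrable_eval_mul_eval _ _ a b))
    (fun c f g => by simp only [eval_smul, smul_eq_mul, mul_left_comm _ c,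
      intervalIntegral.integral_const_mul])

section l2Pairing

variable {a b : ℝ}

@[simp]
theorem l2Pairing_apply (f g : ℝ[X]) :
    l2Pairing a b f g = ∫ x in a..b, f.eval x * g.eval x := rfl

theorem l2Pairing_comm (f g : ℝ[X]) : l2Pairing a b f g = l2Pairing a b g f := by
  simp only [l2Pairing_apply, mul_comm]

theorem l2Pairing_self_nonneg (hab : a ≤ b) (f : ℝ[X]) : 0 ≤ l2Pairing a b f f :=
  integral_nonneg hab fun _ _ => mul_self_nonneg _

theorem l2Pairing_derivative_left (f g : ℝ[X]) :
    l2Pairing a b (derivative f) g =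
      f.eval b * g.eval b - f.eval a * g.eval a - l2Pairing a b f (derivative g) := by
  have h := integral_deriv_mul_eq_sub (a := a) (b := b) (fun x _ => f.hasDerivAt x)
    (fun x _ => g.hasDerivAt x) ((derivative f).continuous.intervalIntegrable a b)
    ((derivative g).continuous.intervalIntegrable a b)
  rw [integral_add (intervalIntegrable_eval_mul_eval _ _ a b)
    (intervalIntegrable_eval_mul_eval _ _ a b)] at h
  simp only [l2Pairing_apply]
  linarith

theorem l2Pairing_iterate_derivative_left {f : ℝ[X]} {k : ℕ}
    (ha : ∀ j < k, (derivative^[j] f).IsRoot a) (hb : ∀ j < k, (derivative^[j] f).IsRoot b)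
    (g : ℝ[X]) :
    l2Pairing a b (derivative^[k] f) g = (-1) ^ k * l2Pairing a b f (derivative^[k] g) := by
  induction k generalizing g with
  | zero => simp
  | succ k ih =>
    rw [Function.iterate_succ_apply', l2Pairing_derivative_left, (ha k k.lt_succ_self).eq_zero,
      (hb k k.lt_succ_self).eq_zero,
      ih (fun j hj => ha j (hj.trans k.lt_succ_self)) (fun j hj => hb j (hj.trans k.lt_succ_self)),
      Function.iterate_succ_apply]
    ring

end l2Pairing

end Polynomial

theorem integral_sub_pow_mul_sub_pow_succ (a b : ℝ) (i j : ℕ) :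
    (i + 1 : ℝ) * ∫ x in a..b, (x - a) ^ i * (b - x) ^ (j + 1) =
      (j + 1 : ℝ) * ∫ x in a..b, (x - a) ^ (i + 1) * (b - x) ^ j := by
  have h :=
    l2Pairing_derivative_left (a := a) (b := b) ((X - C a) ^ (i + 1)) ((C b - X) ^ (j + 1))
  simp only [l2Pairing_apply, derivative_pow, derivative_sub, derivative_X, derivative_C, eval_mul,
    eval_pow, eval_sub, eval_X, eval_C, eval_one, eval_neg, sub_self,
    zero_pow (Nat.succ_ne_zero _), mul_zero, zero_mul, sub_zero, zero_sub,
    ← intervalIntegral.integral_neg] at h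
  push_cast at h
  rw [← intervalIntegral.integral_const_mul, ← intervalIntegral.integral_const_mul]
  exact (integral_congr fun x _ => by ring).trans (h.trans (integral_congr fun x _ => by ring))

theorem factorial_mul_integral_sub_pow_mul_sub_pow (a b : ℝ) (i j : ℕ) :
    (i + j + 1)! * ∫ x in a..b, (x - a) ^ i * (b - x) ^ j =
      i ! * j ! * (b - a) ^ (i + j + 1) := by
  induction j generalizing i with
  | zero =>
    simp only [pow_zero, mul_one, add_zero, intervalIntegral.integral_comp_sub_right (· ^ i),
      sub_self, integral_pow]
    rw [Nat.factorial_succ]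
    push_cast
    field_simp
    ring
  | succ j ih =>
    apply mul_left_cancel₀ (by positivity : (i + 1 : ℝ) ≠ 0)
    calc (i + 1 : ℝ) * ((i + (j + 1) + 1)! * ∫ x in a..b, (x - a) ^ i * (b - x) ^ (j + 1))
        = (j + 1) * ((i + 1 + j + 1)! * ∫ x in a..b, (x - a) ^ (i + 1) * (b - x) ^ j) := by
          rw [mul_left_comm, integral_sub_pow_mul_sub_pow_succ,
            show i + (j + 1) = i + 1 + j by ring]
          ring
      _ = (i + 1) * (i ! * (j + 1)! * (b - a) ^ (i + (j + 1) + 1)) := by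
          rw [ih, Nat.factorial_succ i, Nat.factorial_succ j, show i + 1 + j = i + (j + 1) by ring]
          push_cast
          ring

namespace Polynomial

noncomputable def rodriguesWeight (a b : ℝ) (k : ℕ) : ℝ[X] := (X - C a) ^ k * (X - C b) ^ k

/-- Rodrigues' formula: up to normalisation, the `k`-th Legendre polynomial of `[a, b]`. -/
noncomputable def rodrigues (a b : ℝ) (k : ℕ) : ℝ[X] := derivative^[k] (rodriguesWeight a b k)

variable {a b : ℝ}

theorem monic_rodriguesWeight (a b : ℝ) (k : ℕ) : (rodriguesWeight a b k).Monic :=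
  ((monic_X_sub_C a).pow k).mul ((monic_X_sub_C b).pow k)

theorem natDegree_rodriguesWeight (a b : ℝ) (k : ℕ) :
    (rodriguesWeight a b k).natDegree = 2 * k := by
  rw [rodriguesWeight, ((monic_X_sub_C a).pow k).natDegree_mul ((monic_X_sub_C b).pow k),
    (monic_X_sub_C a).natDegree_pow, (monic_X_sub_C b).natDegree_pow, natDegree_X_sub_C,
    natDegree_X_sub_C, mul_one, two_mul]

theorem degree_rodrigues (a b : ℝ) (k : ℕ) : (rodrigues a b k).degree = k := by
  refine degree_eq_of_le_of_coeff_ne_zero ?_ ?_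
  · refine degree_le_of_natDegree_le ((natDegree_iterate_derivative _ k).trans ?_)
    rw [natDegree_rodriguesWeight]
    omega
  · rw [rodrigues, coeff_iterate_derivative, ← two_mul, ← natDegree_rodriguesWeight a b k,
      (monic_rodriguesWeight a b k).coeff_natDegree, nsmul_one, Nat.cast_ne_zero,
      Ne, Nat.descFactorial_eq_zero_iff_lt, natDegree_rodriguesWeight]
    omega

theorem natDegree_rodrigues (a b : ℝ) (k : ℕ) : (rodrigues a b k).natDegree = k :=
  natDegree_eq_of_degree_eq_some (degree_rodrigues a b k)

noncomputable def rodriguesSequence (a b : ℝ) : Sequence ℝ where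
  elems' := rodrigues a b
  degree_eq' := degree_rodrigues a b

theorem eval_rodrigues_left (a b : ℝ) (k : ℕ) :
    (rodrigues a b k).eval a = k ! * (a - b) ^ k := by
  rw [rodrigues, rodriguesWeight, eval_iterate_derivative_X_sub_C_pow_mul]
  simp

theorem l2Pairing_rodrigues_left (a b : ℝ) (k : ℕ) (g : ℝ[X]) :
    l2Pairing a b (rodrigues a b k) g =
      (-1) ^ k * l2Pairing a b (rodriguesWeight a b k) (derivative^[k] g) :=
  l2Pairing_iterate_derivative_left
    (fun _ hj => isRoot_iterate_derivative_of_pow_dvd (dvd_mul_right _ _) hj)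
    (fun _ hj => isRoot_iterate_derivative_of_pow_dvd (dvd_mul_left _ _) hj) g

theorem l2Pairing_rodrigues_of_natDegree_lt {k : ℕ} {g : ℝ[X]} (hg : g.natDegree < k) :
    l2Pairing a b (rodrigues a b k) g = 0 := by
  rw [l2Pairing_rodrigues_left, iterate_derivative_eq_zero hg, map_zero, mul_zero]

theorem l2Pairing_rodrigues_of_ne {j k : ℕ} (hjk : j ≠ k) :
    l2Pairing a b (rodrigues a b j) (rodrigues a b k) = 0 := by
  rcases hjk.lt_or_gt with h | h
  · rw [l2Pairing_comm]
    exact l2Pairing_rodrigues_of_natDegree_lt (by rwa [natDegree_rodrigues])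
  · exact l2Pairing_rodrigues_of_natDegree_lt (by rwa [natDegree_rodrigues])

theorem two_mul_add_one_mul_l2Pairing_rodrigues_self (a b : ℝ) (k : ℕ) :
    (2 * k + 1 : ℝ) * l2Pairing a b (rodrigues a b k) (rodrigues a b k) =
      (k ! : ℝ) ^ 2 * (b - a) ^ (2 * k + 1) := by
  rw [l2Pairing_rodrigues_left, rodrigues, ← Function.iterate_add_apply, ← two_mul,
    iterate_derivative_eq_C_of_natDegree_le (natDegree_rodriguesWeight a b k).le,
    ← natDegree_rodriguesWeight a b k, (monic_rodriguesWeight a b k).coeff_natDegree,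
    natDegree_rodriguesWeight, mul_one, l2Pairing_apply, ← intervalIntegral.integral_const_mul]
  have hsign (x : ℝ) :
      (-1) ^ k * ((rodriguesWeight a b k).eval x * (C ((2 * k)! : ℝ)).eval x) =
        (2 * k)! * ((x - a) ^ k * (b - x) ^ k) := by
    simp only [rodriguesWeight, eval_pow, eval_mul, eval_sub, eval_X, eval_C, ← mul_pow,
      ← mul_assoc]
    rw [mul_comm, mul_assoc]
    congr 2
    ring
  have hbeta := factorial_mul_integral_sub_pow_mul_sub_pow a b k k
  rw [show k + k + 1 = 2 * k + 1 by ring, Nat.factorial_succ] at hbeta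
  simp only [hsign]
  rw [intervalIntegral.integral_const_mul, ← mul_assoc]
  push_cast at hbeta ⊢
  linear_combination hbeta

theorem l2Pairing_rodrigues_self_pos (hab : a < b) (k : ℕ) :
    0 < l2Pairing a b (rodrigues a b k) (rodrigues a b k) := by
  have hba : 0 < b - a := sub_pos.mpr hab
  refine pos_of_mul_pos_right (a := (2 * k + 1 : ℝ)) ?_ (by positivity)
  rw [two_mul_add_one_mul_l2Pairing_rodrigues_self]
  positivity

theorem sq_eval_rodrigues_left (hab : a ≠ b) (k : ℕ) :
    (rodrigues a b k).eval a ^ 2 =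
      (2 * k + 1) / (b - a) * l2Pairing a b (rodrigues a b k) (rodrigues a b k) := by
  rw [div_mul_eq_mul_div, two_mul_add_one_mul_l2Pairing_rodrigues_self,
    eq_div_iff (sub_ne_zero.mpr hab.symm), eval_rodrigues_left, mul_pow, ← pow_mul,
    ← neg_sub b a, Even.neg_pow ⟨k, by ring⟩, pow_succ]
  ring

theorem l2Pairing_sum_rodrigues (s : Finset ℕ) (c : ℕ → ℝ) {j : ℕ} (hj : j ∈ s) :
    l2Pairing a b (∑ k ∈ s, c k • rodrigues a b k) (rodrigues a b j) =
      c j * l2Pairing a b (rodrigues a b j) (rodrigues a b j) := by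
  rw [map_sum, LinearMap.sum_apply, sum_eq_single_of_mem j hj]
  · simp
  · intro k _ hkj
    simp [l2Pairing_rodrigues_of_ne hkj]

theorem exists_eq_sum_rodrigues_of_orthogonal (hab : a < b) {m N : ℕ} {θ : ℝ[X]}
    (hθ : θ.degree < N) (horth : ∀ q : ℝ[X], q.natDegree < m → l2Pairing a b θ q = 0) :
    ∃ c : ℕ → ℝ, θ = ∑ k ∈ Ico m N, c k • rodrigues a b k := by
  have hspan : θ ∈ Submodule.span ℝ (rodriguesSequence a b '' ↑(range N)) := by
    rw [coe_range, (rodriguesSequence a b).span_degreeLT fun i _ =>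
      isUnit_iff_ne_zero.mpr (leadingCoeff_ne_zero.mpr (Sequence.ne_zero _ i))]
    exact mem_degreeLT.mpr hθ
  obtain ⟨c, hc⟩ := (Submodule.mem_span_image_finset_iff_exists_fun' ℝ).mp hspan
  change ∑ k ∈ range N, c k • rodrigues a b k = θ at hc
  refine ⟨c, hc.symm.trans (sum_subset (fun k hk => ?_) fun k hk hk' => ?_).symm⟩
  · exact mem_range.mpr (mem_Ico.mp hk).2
  · have hkm : k < m := by
      by_contra! h
      exact hk' (mem_Ico.mpr ⟨h, mem_range.mp hk⟩)
    have hck : c k * l2Pairing a b (rodrigues a b k) (rodrigues a b k) = 0 := by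
      rw [← l2Pairing_sum_rodrigues _ c hk, hc]
      exact horth _ (by rwa [natDegree_rodrigues])
    rw [(mul_eq_zero_iff_right (l2Pairing_rodrigues_self_pos hab k).ne').mp hck, zero_smul]

theorem sq_eval_sum_rodrigues_le (hab : a < b) (s : Finset ℕ) (c : ℕ → ℝ) :
    (∑ k ∈ s, c k • rodrigues a b k).eval a ^ 2 ≤
      (∑ k ∈ s, (2 * k + 1 : ℝ)) / (b - a) *
        l2Pairing a b (∑ k ∈ s, c k • rodrigues a b k)
          (∑ k ∈ s, c k • rodrigues a b k) := by
  set θ := ∑ k ∈ s, c k • rodrigues a b k with hθ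
  have hnorm : l2Pairing a b θ θ =
      ∑ k ∈ s, c k ^ 2 * l2Pairing a b (rodrigues a b k) (rodrigues a b k) := by
    nth_rw 2 [hθ]
    rw [map_sum]
    refine sum_congr rfl fun k hk => ?_
    rw [map_smul, smul_eq_mul, l2Pairing_sum_rodrigues s c hk]
    ring
  rw [eval_finsetSum, hnorm, sum_div]
  refine sum_sq_le_sum_mul_sum_of_sq_le_mul s
    (fun k _ => div_nonneg (by positivity) (sub_pos.mpr hab).le)
    (fun k _ => mul_nonneg (sq_nonneg _) (l2Pairing_self_nonneg hab.le _)) fun k _ => ?_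
  rw [eval_smul, smul_eq_mul, mul_pow, sq_eval_rodrigues_left hab.ne]
  exact le_of_eq (by ring)

theorem sq_eval_left_le_of_orthogonal (hab : a < b) {m N : ℕ} {θ : ℝ[X]} (hθ : θ.degree < N)
    (horth : ∀ q : ℝ[X], q.natDegree < m → l2Pairing a b θ q = 0) :
    θ.eval a ^ 2 ≤ (∑ k ∈ Ico m N, (2 * k + 1 : ℝ)) / (b - a) * l2Pairing a b θ θ := by
  obtain ⟨c, rfl⟩ := exists_eq_sum_rodrigues_of_orthogonal hab hθ horth
  exact sq_eval_sum_rodrigues_le hab _ c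

end Polynomial

/-- **Inverse trace inequality on a finite interval.**  Let `T = [a, b]` with `a < b`,
let `-1 ≤ n ≤ p` be integers, let `ξ ∈ ℙ_p(T)`, and let `π = Π_T^n ξ` be the
`L²(T)`-orthogonal projection of `ξ` onto `ℙ_n(T)` (characterized by `π ∈ ℙ_n(T)`,
with `π = 0` when `n = -1`, and `ξ - π ⟂ ℙ_n(T)`).  Then with `θ := ξ - π`,
`|θ(a)|² ≤ ((p-n)(p+n+2)/(b-a)) ⬝ ‖θ‖²_{L²(T)}`. -/
theorem inverse_trace_inequality_interval
    (a b : ℝ) (hab : a < b)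
    (p n : ℤ) (hn : -1 ≤ n) (hnp : n ≤ p)
    (ξ π : Polynomial ℝ)
    (hξ : ξ = 0 ∨ (ξ.natDegree : ℤ) ≤ p)
    (hπ : π = 0 ∨ (π.natDegree : ℤ) ≤ n)
    (horth : ∀ q : Polynomial ℝ, (q.natDegree : ℤ) ≤ n →
      ∫ x in Set.Icc a b, (ξ - π).eval x * q.eval x = 0) :
    ((ξ - π).eval a) ^ 2 ≤
      (((p - n) * (p + n + 2) : ℤ) : ℝ) / (b - a) *
        ∫ x in Set.Icc a b, ((ξ - π).eval x) ^ 2 := by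
  have hIcc (f : ℝ → ℝ) : ∫ x in Set.Icc a b, f x = ∫ x in a..b, f x := by
    rw [integral_Icc_eq_integral_Ioc, intervalIntegral.integral_of_le hab.le]
  have hdeg (f : ℝ[X]) (hf : f = 0 ∨ (f.natDegree : ℤ) ≤ p) : f.degree < (p + 1).toNat := by
    rcases hf with rfl | hf
    · rw [degree_zero]
      exact WithBot.bot_lt_coe _
    · exact degree_le_natDegree.trans_lt (Nat.cast_lt.mpr (by omega))
  have hθ : (ξ - π).degree < (p + 1).toNat :=
    (degree_sub_le _ _).trans_lt (max_lt (hdeg ξ hξ) (hdeg π (hπ.imp_right (·.trans hnp))))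
  have horth' (q : ℝ[X]) (hq : q.natDegree < (n + 1).toNat) : l2Pairing a b (ξ - π) q = 0 := by
    rw [l2Pairing_apply, ← hIcc]
    exact horth q (by omega)
  have hsum : ∑ k ∈ Ico (n + 1).toNat (p + 1).toNat, (2 * k + 1 : ℝ) =
      (((p - n) * (p + n + 2) : ℤ) : ℝ) := by
    have hN : ((p + 1).toNat : ℝ) = p + 1 := by exact_mod_cast Int.toNat_of_nonneg (by omega)
    have hm : ((n + 1).toNat : ℝ) = n + 1 := by exact_mod_cast Int.toNat_of_nonneg (by omega)
    rw [sum_Ico_two_mul_add_one (by omega), hN, hm]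
    push_cast
    ring
  have key := sq_eval_left_le_of_orthogonal hab hθ horth'
  rw [hsum, l2Pairing_apply] at key
  simpa only [hIcc, sq] using key
end

section
/- Let p, n be integers with −1 ≤ n < p. Then there exists a nonzero real polynomial θ in two variables of total degree at most p on the reference triangle T̂ = {(r, s) : −1 ≤ r, −1 ≤ s, r + s ≤ 0}, L²(T̂)-orthogonal to all polynomials of total degree at most n, such that ∫_{−1}^{1} θ(r, −1)² dr = ((p−n)(p+n+3)/2) · ∫_{T̂} θ² , i.e. the constant (p−n)(p+n+3)/2 in the inverse trace inequality on the reference triangle is attained. -/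
/-!
The extremal `θ` depends on `s` only, `θ(r, s) = f(s)`. Integrating out `r` over `T̂` turns
`∫_{T̂} θ q` into `∫_{-1}^{1} (1 - s) f(s) h(s) ds` with `deg h ≤ deg q`, and `∫_{T̂} θ²` into
`∫_{-1}^{1} (1 - s) f(s)² ds`, while the trace integral is `2 f(-1)²`. So it suffices to find `f` of
degree `≤ p`, orthogonal to degree `≤ n` for the Jacobi weight `1 - s`, with
`∫ (1 - s) f² = 2 f(-1)` and `f(-1) = (p - n)(p + n + 3)/2`.

Take `f = K_{p+1} - K_{n+1}`, where `K_a` represents `h ↦ 2 h(-1)` on polynomials of degree `< a`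
for this weight. By Rodrigues' formula, `K_a` is a multiple of the derivative of the Legendre
polynomial `P_a`: one integration by parts against `(1 - s) h` leaves a boundary term at `-1` and
`∫ P_a ((1 - s) h)'`, which vanishes by orthogonality of `P_a`. The values at `-1` come from the
Taylor expansion of `(X² - 1)^a = X^a (X - 2)^a` around `-1`, and give `K_a(-1) = a (a + 1)/2`.
-/

open MeasureTheory Set

namespace Polynomial

section Semiring

variable {R : Type*} [Semiring R]

theorem natDegree_C_mul_X_pow_mul_geom_sum_le (c : R) (a b : ℕ) :
    (C c * X ^ b * ∑ i ∈ Finset.range (a + 1), (X : R[X]) ^ i).natDegree ≤ b + a := by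
  refine natDegree_mul_le.trans (add_le_add (natDegree_C_mul_le _ _ |>.trans (natDegree_X_pow_le _))
    (natDegree_sum_le_of_forall_le _ _ fun i hi ↦ (natDegree_X_pow_le _).trans ?_))
  exact Nat.lt_succ_iff.mp (Finset.mem_range.mp hi)

end Semiring

section CommRing

variable {R : Type*} [CommRing R]

theorem eval_iterate_derivative_eq_factorial_mul_coeff_taylor (f : R[X]) (r : R) (k : ℕ) :
    (derivative^[k] f).eval r = k.factorial * (taylor r f).coeff k := by
  rw [taylor_coeff, ← factorial_smul_hasseDeriv, LinearMap.smul_apply, eval_smul, nsmul_eq_mul]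

theorem taylor_X_sq_sub_one_pow {c : R} (hc : c ^ 2 = 1) (a : ℕ) :
    taylor c ((X ^ 2 - 1 : R[X]) ^ a) = X ^ a * (X + C (2 * c)) ^ a := by
  rw [taylor_pow, ← mul_pow]
  congr 1
  rw [map_sub, taylor_X_pow, taylor_one, ← hc, C_pow, C_mul, C_ofNat]
  ring

theorem eval_iterate_derivative_X_sq_sub_one_pow_of_lt {c : R} (hc : c ^ 2 = 1) {a k : ℕ}
    (hk : k < a) : (derivative^[k] ((X ^ 2 - 1 : R[X]) ^ a)).eval c = 0 := by
  rw [eval_iterate_derivative_eq_factorial_mul_coeff_taylor, taylor_X_sq_sub_one_pow hc,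
    coeff_X_pow_mul', if_neg (by omega), mul_zero]

-- `a - j` truncates harmlessly: `a.choose j = 0` for `j > a`.
theorem eval_neg_one_iterate_derivative_X_sq_sub_one_pow (a j : ℕ) :
    (derivative^[a + j] ((X ^ 2 - 1 : R[X]) ^ a)).eval (-1) =
      (a + j).factorial * (-2) ^ (a - j) * a.choose j := by
  rw [eval_iterate_derivative_eq_factorial_mul_coeff_taylor,
    taylor_X_sq_sub_one_pow (by ring), coeff_X_pow_mul', if_pos (by omega),
    Nat.add_sub_cancel_left, coeff_X_add_C_pow]
  ring

theorem degree_derivative_lt_of_degree_lt_succ {p : R[X]} {k : ℕ} (hp : p.degree < ↑(k + 1)) :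
    (derivative p).degree < k := by
  rw [degree_lt_iff_coeff_zero] at *
  intro m hm
  rw [coeff_derivative, hp (m + 1) (by omega), zero_mul]

theorem degree_one_sub_X_mul_lt {p : R[X]} {k : ℕ} (hp : p.degree < k) :
    ((1 - X) * p).degree < ↑(k + 1) := by
  rw [degree_lt_iff_coeff_zero] at *
  intro m hm
  rw [sub_mul, one_mul, coeff_sub, hp m (by omega)]
  obtain ⟨m, rfl⟩ : ∃ j, m = j + 1 := ⟨m - 1, by omega⟩
  rw [coeff_X_mul, hp m (by omega), sub_zero]

end CommRing

theorem integral_eval_mul_eval_derivative (u v : ℝ[X]) (a b : ℝ) :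
    ∫ x in a..b, u.eval x * (derivative v).eval x =
      u.eval b * v.eval b - u.eval a * v.eval a - ∫ x in a..b, (derivative u).eval x * v.eval x :=
  intervalIntegral.integral_mul_deriv_eq_deriv_mul (fun x _ ↦ u.hasDerivAt x)
    (fun x _ ↦ v.hasDerivAt x) ((derivative u).continuous.intervalIntegrable _ _)
    ((derivative v).continuous.intervalIntegrable _ _)

theorem integral_eval_mul_eval_iterate_derivative_X_sq_sub_one_pow {a k : ℕ} (hk : k ≤ a)
    {h : ℝ[X]} (hh : h.degree < k) :
    ∫ x in (-1 : ℝ)..1, h.eval x * (derivative^[k] ((X ^ 2 - 1 : ℝ[X]) ^ a)).eval x = 0 := by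
  induction k generalizing h with
  | zero => simp [show h = 0 by simpa using hh]
  | succ k ih =>
    rw [Function.iterate_succ_apply', integral_eval_mul_eval_derivative,
      eval_iterate_derivative_X_sq_sub_one_pow_of_lt (by norm_num) hk,
      eval_iterate_derivative_X_sq_sub_one_pow_of_lt (by norm_num) hk,
      ih (by omega) (degree_derivative_lt_of_degree_lt_succ hh)]
    ring

end Polynomial

section JacobiWeight

open Polynomial

noncomputable def jacobiInner (g h : ℝ[X]) : ℝ :=
  ∫ x in (-1 : ℝ)..1, (1 - x) * g.eval x * h.eval x

theorem jacobiInner_comm (g h : ℝ[X]) : jacobiInner g h = jacobiInner h g := by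
  simp only [jacobiInner, mul_right_comm _ (g.eval _)]

theorem jacobiInner_sub_right (g h₁ h₂ : ℝ[X]) :
    jacobiInner g (h₁ - h₂) = jacobiInner g h₁ - jacobiInner g h₂ := by
  simp only [jacobiInner, eval_sub, mul_sub]
  exact intervalIntegral.integral_sub (Continuous.intervalIntegrable (by fun_prop) _ _)
    (Continuous.intervalIntegrable (by fun_prop) _ _)

theorem jacobiInner_C_mul_right (g h : ℝ[X]) (c : ℝ) :
    jacobiInner g (C c * h) = c * jacobiInner g h := by
  simp only [jacobiInner, eval_mul, eval_C, ← intervalIntegral.integral_const_mul]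
  congr 1 with x
  ring

theorem jacobiInner_iterate_derivative_X_sq_sub_one_pow {a : ℕ} {h : ℝ[X]} (hh : h.degree < a) :
    jacobiInner h (derivative^[a + 1] ((X ^ 2 - 1) ^ a)) =
      -2 * h.eval (-1) * (derivative^[a] ((X ^ 2 - 1 : ℝ[X]) ^ a)).eval (-1) := by
  have hparts := integral_eval_mul_eval_derivative ((1 - X) * h)
    (derivative^[a] ((X ^ 2 - 1) ^ a)) (-1) 1
  rw [integral_eval_mul_eval_iterate_derivative_X_sq_sub_one_pow le_rfl
    (degree_derivative_lt_of_degree_lt_succ (degree_one_sub_X_mul_lt hh))] at hparts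
  rw [jacobiInner, Function.iterate_succ_apply']
  simp only [eval_mul, eval_sub, eval_one, eval_X] at hparts ⊢
  linear_combination hparts

noncomputable def jacobiKernel (a : ℕ) : ℝ[X] :=
  C (-((-2 : ℝ) ^ a * a.factorial)⁻¹) * derivative^[a + 1] ((X ^ 2 - 1) ^ a)

theorem degree_jacobiKernel_lt (a : ℕ) : (jacobiKernel a).degree < a := by
  rw [jacobiKernel, degree_C_mul (by simp [Nat.factorial_ne_zero]), degree_lt_iff_coeff_zero]
  intro m hm
  rw [coeff_iterate_derivative, coeff_eq_zero_of_natDegree_lt, smul_zero]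
  calc ((X ^ 2 - 1 : ℝ[X]) ^ a).natDegree ≤ a * 2 := natDegree_pow_le_of_le a (by compute_degree!)
    _ < m + (a + 1) := by omega

theorem jacobiInner_jacobiKernel {a : ℕ} {h : ℝ[X]} (hh : h.degree < a) :
    jacobiInner h (jacobiKernel a) = 2 * h.eval (-1) := by
  have hS := eval_neg_one_iterate_derivative_X_sq_sub_one_pow (R := ℝ) a 0
  rw [add_zero, Nat.sub_zero, Nat.choose_zero_right, Nat.cast_one, mul_one] at hS
  rw [jacobiKernel, jacobiInner_C_mul_right, jacobiInner_iterate_derivative_X_sq_sub_one_pow hh, hS]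
  field_simp

theorem eval_neg_one_jacobiKernel (a : ℕ) : (jacobiKernel a).eval (-1) = a * (a + 1) / 2 := by
  rcases a with _ | a
  · simp [jacobiKernel]
  rw [jacobiKernel, eval_mul, eval_C, eval_neg_one_iterate_derivative_X_sq_sub_one_pow,
    Nat.add_sub_cancel, Nat.choose_one_right, Nat.factorial_succ (a + 1)]
  push_cast
  field_simp
  ring

theorem eval_neg_one_jacobiKernel_sub (m k : ℕ) :
    (jacobiKernel k - jacobiKernel m).eval (-1) = ((k : ℝ) * (k + 1) - m * (m + 1)) / 2 := by
  rw [eval_sub, eval_neg_one_jacobiKernel, eval_neg_one_jacobiKernel]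
  ring

theorem eval_neg_one_jacobiKernel_sub_pos {m k : ℕ} (hmk : m < k) :
    0 < (jacobiKernel k - jacobiKernel m).eval (-1) := by
  have : (m : ℝ) + 1 ≤ k := by exact_mod_cast hmk
  rw [eval_neg_one_jacobiKernel_sub]
  nlinarith

theorem degree_jacobiKernel_sub_lt {m k : ℕ} (hmk : m ≤ k) :
    (jacobiKernel k - jacobiKernel m).degree < k :=
  (degree_sub_le _ _).trans_lt <| max_lt (degree_jacobiKernel_lt k)
    ((degree_jacobiKernel_lt m).trans_le (by exact_mod_cast hmk))

theorem jacobiInner_jacobiKernel_sub {m k : ℕ} (hmk : m ≤ k) {h : ℝ[X]} (hh : h.degree < m) :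
    jacobiInner h (jacobiKernel k - jacobiKernel m) = 0 := by
  rw [jacobiInner_sub_right, jacobiInner_jacobiKernel hh,
    jacobiInner_jacobiKernel (hh.trans_le (by exact_mod_cast hmk)), sub_self]

theorem jacobiInner_jacobiKernel_sub_self {m k : ℕ} (hmk : m ≤ k) :
    jacobiInner (jacobiKernel k - jacobiKernel m) (jacobiKernel k - jacobiKernel m) =
      2 * (jacobiKernel k - jacobiKernel m).eval (-1) := by
  rw [jacobiInner_sub_right _ (jacobiKernel k), jacobiInner_jacobiKernel
    (degree_jacobiKernel_sub_lt hmk), jacobiInner_comm,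
    jacobiInner_jacobiKernel_sub hmk (degree_jacobiKernel_lt m), sub_zero]

end JacobiWeight

theorem Polynomial.totalDegree_toMvPolynomial_le {σ R : Type*} [CommSemiring R]
    (f : Polynomial R) (i : σ) : (f.toMvPolynomial i).totalDegree ≤ f.natDegree := by
  conv_lhs => rw [f.as_sum_range_C_mul_X_pow]
  rw [map_sum]
  refine (MvPolynomial.totalDegree_finsetSum _ _).trans (Finset.sup_le fun k hk ↦ ?_)
  rw [map_mul, map_pow, Polynomial.toMvPolynomial_C, Polynomial.toMvPolynomial_X,
    MvPolynomial.C_mul_X_pow_eq_monomial]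
  refine (MvPolynomial.totalDegree_monomial_le _ _).trans ?_
  rw [Finsupp.sum_single_index rfl]
  exact Nat.lt_succ_iff.mp (Finset.mem_range.mp hk)

section ReferenceTriangle

open Polynomial

def refTriangle : Set (Fin 2 → ℝ) := {x | -1 ≤ x 0 ∧ -1 ≤ x 1 ∧ x 0 + x 1 ≤ 0}

theorem setIntegral_refTriangle {F : (Fin 2 → ℝ) → ℝ} (hF : Continuous F) :
    ∫ x in refTriangle, F x = ∫ s in (-1 : ℝ)..1, ∫ r in (-1 : ℝ)..(-s), F ![r, s] := by
  let A : Set (ℝ × ℝ) := {z | -1 ≤ z.1 ∧ -1 ≤ z.2 ∧ z.1 + z.2 ≤ 0}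
  have hA : IsCompact A := by
    refine isCompact_Icc (a := ((-1 : ℝ), (-1 : ℝ))) (b := (1, 1)) |>.of_isClosed_subset ?_ ?_
    · exact (isClosed_le continuous_const continuous_fst).inter <|
        (isClosed_le continuous_const continuous_snd).inter <|
          isClosed_le (continuous_fst.add continuous_snd) continuous_const
    · rintro ⟨r, s⟩ ⟨hr, hs, hrs⟩
      exact ⟨⟨hr, hs⟩, by linarith, by linarith⟩
  let G : ℝ × ℝ → ℝ := fun z ↦ F ![z.1, z.2]
  have hG : Continuous G := by fun_prop
  have hAG : ∀ r s, A.indicator G (r, s) =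
      (Icc (-1) 1).indicator (fun s ↦ (Icc (-1) (-s)).indicator (fun r ↦ G (r, s)) r) s := by
    intro r s
    simp only [indicator_apply, mem_Icc, A, mem_ofPred]
    split_ifs <;> grind
  calc ∫ x in refTriangle, F x = ∫ z in A, G z := by
        rw [← (volume_preserving_finTwoArrow ℝ).setIntegral_preimage_emb
          MeasurableEquiv.finTwoArrow.measurableEmbedding]
        congr 1 with x
        simp only [G, MeasurableEquiv.finTwoArrow_apply]
        congr 1
        ext i
        fin_cases i <;> rfl
    _ = ∫ s, ∫ r, A.indicator G (r, s) := by
        rw [← integral_indicator hA.measurableSet, Measure.volume_eq_prod, integral_prod_symm]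
        exact (integrable_indicator_iff hA.measurableSet).2 (hG.continuousOn.integrableOn_compact hA)
    _ = _ := by
      simp_rw [hAG]
      rw [intervalIntegral.integral_of_le (by norm_num), ← integral_Icc_eq_integral_Ioc,
        ← integral_indicator measurableSet_Icc]
      congr 1 with s
      by_cases hs : s ∈ Icc (-1) 1
      · simp only [indicator_of_mem hs]
        rw [intervalIntegral.integral_of_le (by linarith [hs.2]), ← integral_Icc_eq_integral_Ioc,
          ← integral_indicator measurableSet_Icc]
      · simp [indicator_of_notMem hs]

theorem intervalIntegral_eval_monomial_eq_one_sub_mul (d : Fin 2 →₀ ℕ) (c s : ℝ) :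
    ∫ r in (-1 : ℝ)..(-s), MvPolynomial.eval ![r, s] (MvPolynomial.monomial d c) =
      (1 - s) * (C (c * (-1) ^ d 0 / (d 0 + 1)) * X ^ d 1 *
        ∑ i ∈ Finset.range (d 0 + 1), X ^ i).eval s := by
  simp only [MvPolynomial.eval_monomial, Finsupp.prod_fintype _ _ (fun _ ↦ pow_zero _),
    Fin.prod_univ_two, Matrix.cons_val_zero, Matrix.cons_val_one,
    ← mul_assoc, intervalIntegral.integral_mul_const, intervalIntegral.integral_const_mul,
    integral_pow, eval_mul, eval_C, eval_pow, eval_X, eval_finsetSum]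
  rw [neg_pow s]
  field_simp
  linear_combination (-(c * s ^ d 1 * (-1) ^ d 0)) * mul_neg_geom_sum s (d 0 + 1)

theorem exists_intervalIntegral_eval_eq_one_sub_mul (q : MvPolynomial (Fin 2) ℝ) :
    ∃ h : ℝ[X], h.natDegree ≤ q.totalDegree ∧
      ∀ s : ℝ, ∫ r in (-1 : ℝ)..(-s), MvPolynomial.eval ![r, s] q = (1 - s) * h.eval s := by
  let P : MvPolynomial (Fin 2) ℝ → Prop := fun g ↦ ∃ h : ℝ[X], h.natDegree ≤ q.totalDegree ∧
    ∀ s : ℝ, ∫ r in (-1 : ℝ)..(-s), MvPolynomial.eval ![r, s] g = (1 - s) * h.eval s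
  have hadd : ∀ g₁ g₂, P g₁ → P g₂ → P (g₁ + g₂) := by
    rintro g₁ g₂ ⟨h₁, hdeg₁, hint₁⟩ ⟨h₂, hdeg₂, hint₂⟩
    refine ⟨h₁ + h₂, natDegree_add_le_of_degree_le hdeg₁ hdeg₂, fun s ↦ ?_⟩
    simp only [map_add, eval_add]
    have hcont (g : MvPolynomial (Fin 2) ℝ) : Continuous fun r : ℝ ↦ MvPolynomial.eval ![r, s] g :=
      (MvPolynomial.continuous_eval g).comp (by fun_prop)
    rw [intervalIntegral.integral_add ((hcont g₁).intervalIntegrable _ _)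
      ((hcont g₂).intervalIntegrable _ _), hint₁, hint₂, mul_add]
  have hmonomial : ∀ d ∈ q.support, P (MvPolynomial.monomial d (q.coeff d)) := by
    intro d hd
    refine ⟨_, (natDegree_C_mul_X_pow_mul_geom_sum_le _ _ _).trans ?_,
      intervalIntegral_eval_monomial_eq_one_sub_mul d _⟩
    have := MvPolynomial.le_totalDegree hd
    rwa [Finsupp.sum_fintype _ _ (fun _ ↦ rfl), Fin.sum_univ_two, add_comm] at this
  have := Finset.sum_induction _ P hadd ⟨0, by simp, by simp⟩ hmonomial
  rwa [← q.as_sum] at this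

theorem setIntegral_refTriangle_eval_toMvPolynomial_mul (f h : ℝ[X]) {G : (Fin 2 → ℝ) → ℝ}
    (hG : Continuous G) (hGh : ∀ s : ℝ, ∫ r in (-1 : ℝ)..(-s), G ![r, s] = (1 - s) * h.eval s) :
    ∫ x in refTriangle, MvPolynomial.eval x (f.toMvPolynomial 1) * G x = jacobiInner h f := by
  rw [setIntegral_refTriangle (F := fun x ↦ MvPolynomial.eval x (f.toMvPolynomial 1) * G x)
    ((MvPolynomial.continuous_eval _).mul hG)]
  simp only [MvPolynomial.eval_toMvPolynomial, Matrix.cons_val_one, Matrix.cons_val_zero,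
    intervalIntegral.integral_const_mul, hGh, jacobiInner]
  congr 1 with s
  ring

theorem exists_setIntegral_refTriangle_eval_toMvPolynomial_mul_eq_jacobiInner (f : ℝ[X])
    (q : MvPolynomial (Fin 2) ℝ) : ∃ h : ℝ[X], h.natDegree ≤ q.totalDegree ∧
      ∫ x in refTriangle, MvPolynomial.eval x (f.toMvPolynomial 1) * MvPolynomial.eval x q =
        jacobiInner h f := by
  obtain ⟨h, hdeg, hint⟩ := exists_intervalIntegral_eval_eq_one_sub_mul q
  exact ⟨h, hdeg,
    setIntegral_refTriangle_eval_toMvPolynomial_mul f h (MvPolynomial.continuous_eval q) hint⟩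

theorem setIntegral_refTriangle_eval_toMvPolynomial_sq (f : ℝ[X]) :
    ∫ x in refTriangle, (MvPolynomial.eval x (f.toMvPolynomial 1)) ^ 2 = jacobiInner f f := by
  simp_rw [sq]
  refine setIntegral_refTriangle_eval_toMvPolynomial_mul f f (MvPolynomial.continuous_eval _)
    fun s ↦ ?_
  simp only [MvPolynomial.eval_toMvPolynomial, Matrix.cons_val_one, Matrix.cons_val_zero,
    intervalIntegral.integral_const, smul_eq_mul]
  ring

theorem intervalIntegral_eval_toMvPolynomial_sq_bottom_edge (f : ℝ[X]) :
    ∫ r in (-1 : ℝ)..1, (MvPolynomial.eval ![r, -1] (f.toMvPolynomial 1)) ^ 2 =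
      2 * f.eval (-1) ^ 2 := by
  simp only [MvPolynomial.eval_toMvPolynomial, Matrix.cons_val_one, Matrix.cons_val_zero,
    intervalIntegral.integral_const, smul_eq_mul]
  ring

end ReferenceTriangle

open MeasureTheory MvPolynomial

/-- **Sharpness of the inverse trace inequality on the reference triangle**
`T̂ = {(r,s) : -1 ≤ r, -1 ≤ s, r + s ≤ 0}`.  For integers `-1 ≤ n < p` there exists a
nonzero real polynomial `θ` in two variables of total degree at most `p`,
`L²(T̂)`-orthogonal to every polynomial of total degree at most `n` (vacuous when
`n = -1`), such that
`∫_{-1}^{1} θ(r,-1)² dr = ((p-n)(p+n+3)/2) ⬝ ∫_{T̂} θ²`. -/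
theorem inverse_trace_inequality_reference_triangle_sharp
    (p n : ℤ) (hn : -1 ≤ n) (hnp : n < p)
    (Tref : Set (Fin 2 → ℝ))
    (hT : Tref = {x | -1 ≤ x 0 ∧ -1 ≤ x 1 ∧ x 0 + x 1 ≤ 0}) :
    ∃ θ : MvPolynomial (Fin 2) ℝ, θ ≠ 0 ∧ (θ.totalDegree : ℤ) ≤ p ∧
      (∀ q : MvPolynomial (Fin 2) ℝ, (q.totalDegree : ℤ) ≤ n →
        ∫ x in Tref, eval x θ * eval x q = 0) ∧
      ∫ r in (-1 : ℝ)..1, (eval ![r, -1] θ) ^ 2 =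
        (((p - n) * (p + n + 3) : ℤ) : ℝ) / 2 * ∫ x in Tref, (eval x θ) ^ 2 := by
  obtain ⟨m, rfl⟩ : ∃ m : ℕ, n = m - 1 := ⟨(n + 1).toNat, by omega⟩
  obtain ⟨k, rfl⟩ : ∃ k : ℕ, p = k - 1 := ⟨(p + 1).toNat, by omega⟩
  have hmk : m < k := by omega
  rw [show Tref = refTriangle from hT]
  set f := jacobiKernel k - jacobiKernel m
  have hf_pos : 0 < f.eval (-1) := eval_neg_one_jacobiKernel_sub_pos hmk
  have hf_ne : f ≠ 0 := by
    rintro h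
    simp [h] at hf_pos
  refine ⟨f.toMvPolynomial 1, (map_ne_zero_iff _ (Polynomial.toMvPolynomial_injective 1)).2 hf_ne,
    ?_, fun q hq ↦ ?_, ?_⟩
  · have : (f.toMvPolynomial (1 : Fin 2)).totalDegree < k :=
      (f.totalDegree_toMvPolynomial_le _).trans_lt
        ((Polynomial.natDegree_lt_iff_degree_lt hf_ne).2 (degree_jacobiKernel_sub_lt hmk.le))
    omega
  · obtain ⟨h, hdeg, hint⟩ :=
      exists_setIntegral_refTriangle_eval_toMvPolynomial_mul_eq_jacobiInner f q
    rw [hint]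
    exact jacobiInner_jacobiKernel_sub hmk.le
      (Polynomial.degree_le_natDegree.trans_lt (by exact_mod_cast (by omega : h.natDegree < m)))
  · rw [intervalIntegral_eval_toMvPolynomial_sq_bottom_edge,
      setIntegral_refTriangle_eval_toMvPolynomial_sq, jacobiInner_jacobiKernel_sub_self hmk.le,
      eval_neg_one_jacobiKernel_sub]
    push_cast
    ring
end

section
/- Let p, n be integers with −1 ≤ n < p and let S = {(i, j) ∈ ℕ² : n+1 ≤ i+j ≤ p}. Define the real symmetric matrix L indexed by S × S with entries L_{(i,j),(k,l)} = δ_{ik} · (−1)^{j+l} · √(i+j+1) · √(k+l+1), where δ_{ik} is the Kronecker delta. Then L is positive semidefinite and its largest eigenvalue (equivalently, its spectral radius) equals (p−n)(p+n+3)/2. -/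
/-!
Grouping the index set by the first coordinate `i`, `L` is block diagonal with rank-one
blocks `u uᵀ`, where `u (i, j) = (-1)^j √(i+j+1)`. Hence `xᵀ L x = ∑ᵢ ⟨u, x⟩ᵢ² ≥ 0`, and by
Cauchy–Schwarz on each block every eigenvalue is at most the largest squared block norm
`∑ (i+j+1)` over a fibre. The degrees `i + j` in the fibre of `i` run over `[max(n+1, i), p]`,
so the largest block is `i = 0`, of squared norm `∑_{m=n+1}^{p} (m+1) = (p-n)(p+n+3)/2`,
attained by the block vector itself.
-/

open Finset Matrix

namespace Matrix

variable {n K : Type*} [Fintype n] [DecidableEq n]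

theorem mem_spectrum_iff_exists_mulVec_eq_smul [Field K] {A : Matrix n n K} {μ : K} :
    μ ∈ spectrum K A ↔ ∃ v, v ≠ 0 ∧ A *ᵥ v = μ • v := by
  rw [← spectrum_toLin', ← Module.End.hasEigenvalue_iff_mem_spectrum,
    Module.End.hasEigenvalue_iff, Submodule.ne_bot_iff]
  simp only [Module.End.mem_eigenspace_iff, toLin'_apply, and_comm]

theorem le_of_mem_spectrum_of_dotProduct_mulVec_le [Field K] [LinearOrder K]
    [IsStrictOrderedRing K] {A : Matrix n n K} {c μ : K}
    (hA : ∀ x, x ⬝ᵥ (A *ᵥ x) ≤ c * (x ⬝ᵥ x)) (hμ : μ ∈ spectrum K A) : μ ≤ c := by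
  obtain ⟨v, hv, hAv⟩ := mem_spectrum_iff_exists_mulVec_eq_smul.1 hμ
  have hvv : 0 < v ⬝ᵥ v :=
    (Finset.sum_nonneg fun i _ => mul_self_nonneg (v i)).lt_of_ne'
      (dotProduct_self_eq_zero.not.2 hv)
  refine le_of_mul_le_mul_right ?_ hvv
  simpa [hAv, dotProduct_smul] using hA v

end Matrix

section BlockRankOne

variable {ι κ R : Type*} [DecidableEq κ]

def blockRankOne [Mul R] [Zero R] (f : ι → κ) (u : ι → R) : Matrix ι ι R :=
  Matrix.of fun a b => if f a = f b then u a * u b else 0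

variable [Fintype ι] (f : ι → κ)

theorem dotProduct_blockRankOne_mulVec [CommRing R] (u x : ι → R) :
    x ⬝ᵥ (blockRankOne f u *ᵥ x) = ∑ k ∈ univ.image f, (∑ a with f a = k, u a * x a) ^ 2 := by
  have hrow : ∀ a, (blockRankOne f u *ᵥ x) a = u a * ∑ b with f b = f a, u b * x b := by
    intro a
    simp only [mulVec, dotProduct, blockRankOne, of_apply, sum_filter, mul_sum,
      eq_comm (a := f a)]
    refine sum_congr rfl fun b _ => ?_
    split_ifs <;> ring
  simp only [dotProduct, hrow]
  rw [← sum_fiberwise_of_maps_to (g := f) (t := univ.image f)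
    fun a _ => mem_image_of_mem f (mem_univ a)]
  refine sum_congr rfl fun k _ => ?_
  rw [sq, sum_mul]
  refine sum_congr rfl fun a ha => ?_
  rw [(mem_filter.1 ha).2]
  ring

theorem blockRankOne_mulVec_fiber [CommRing R] (u : ι → R) (c : κ) :
    blockRankOne f u *ᵥ (fun a => if f a = c then u a else 0) =
      (∑ a with f a = c, u a ^ 2) • fun a => if f a = c then u a else 0 := by
  ext a
  simp only [mulVec, dotProduct, blockRankOne, of_apply, Pi.smul_apply, smul_eq_mul]
  split_ifs with ha
  · subst ha
    rw [sum_filter, sum_mul]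
    refine sum_congr rfl fun b _ => ?_
    simp only [eq_comm (a := f a)]
    split_ifs <;> ring
  · rw [mul_zero]
    refine sum_eq_zero fun b _ => ?_
    split_ifs with hab hb
    · exact absurd (hab.trans hb) ha
    all_goals ring

theorem posSemidef_blockRankOne (u : ι → ℝ) : (blockRankOne f u).PosSemidef := by
  refine .of_dotProduct_mulVec_nonneg ?_ fun x => ?_
  · ext a b
    simp only [conjTranspose_apply, blockRankOne, of_apply, star_trivial, eq_comm (a := f a)]
    split_ifs <;> ring
  · rw [star_trivial, dotProduct_blockRankOne_mulVec]
    exact sum_nonneg fun _ _ => sq_nonneg _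

theorem dotProduct_blockRankOne_mulVec_le {u : ι → ℝ} {c : ℝ}
    (hc : ∀ k, ∑ a with f a = k, u a ^ 2 ≤ c) (x : ι → ℝ) :
    x ⬝ᵥ (blockRankOne f u *ᵥ x) ≤ c * (x ⬝ᵥ x) := by
  rw [dotProduct_blockRankOne_mulVec]
  calc ∑ k ∈ univ.image f, (∑ a with f a = k, u a * x a) ^ 2
      ≤ ∑ k ∈ univ.image f, c * ∑ a with f a = k, x a ^ 2 := by
        refine sum_le_sum fun k _ => (sum_mul_sq_le_sq_mul_sq _ _ _).trans ?_
        exact mul_le_mul_of_nonneg_right (hc k) (sum_nonneg fun _ _ => sq_nonneg _)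
    _ = c * (x ⬝ᵥ x) := by
        rw [← mul_sum, sum_fiberwise_of_maps_to fun a _ => mem_image_of_mem f (mem_univ a)]
        simp only [dotProduct, sq]

theorem sum_fiber_sq_mem_spectrum_blockRankOne [DecidableEq ι] [Field R] {u : ι → R} {c : κ}
    (hc : ∃ a, f a = c ∧ u a ≠ 0) :
    ∑ a with f a = c, u a ^ 2 ∈ spectrum R (blockRankOne f u) := by
  obtain ⟨a, hac, hua⟩ := hc
  refine mem_spectrum_iff_exists_mulVec_eq_smul.2
    ⟨_, fun h => hua ?_, blockRankOne_mulVec_fiber f u c⟩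
  simpa [hac] using congrFun h a

end BlockRankOne

noncomputable def faceWeight (x : ℕ × ℕ) : ℝ := (-1) ^ x.2 * √(x.1 + x.2 + 1)

theorem faceWeight_sq (x : ℕ × ℕ) : faceWeight x ^ 2 = x.1 + x.2 + 1 := by
  rw [faceWeight, mul_pow, ← pow_mul, pow_mul', neg_one_sq, one_pow, one_mul,
    Real.sq_sqrt (by positivity)]

theorem faceWeight_ne_zero (x : ℕ × ℕ) : faceWeight x ≠ 0 :=
  mul_ne_zero (pow_ne_zero _ (by norm_num)) (Real.sqrt_pos.2 (by positivity)).ne'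

theorem sum_fiber_faceWeight_sq {S : Set (ℕ × ℕ)} [Fintype S] {I : Finset ℕ}
    (hS : ∀ x, x ∈ S ↔ x.1 + x.2 ∈ I) (i : ℕ) :
    ∑ a : S with a.1.1 = i, faceWeight a ^ 2 = ∑ m ∈ I with i ≤ m, ((m : ℝ) + 1) := by
  refine sum_bij' (fun a _ => a.1.1 + a.1.2)
    (fun m hm => ⟨(i, m - i), (hS _).2 ?_⟩) ?_ ?_ ?_ ?_ ?_
  · obtain ⟨hmI, him⟩ := mem_filter.1 hm
    simpa [Nat.add_sub_cancel' him] using hmI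
  · rintro ⟨⟨j, l⟩, hx⟩ hj
    obtain rfl : j = i := (mem_filter.1 hj).2
    exact mem_filter.2 ⟨(hS _).1 hx, le_add_right le_rfl⟩
  · intro m _
    simp
  · rintro ⟨⟨j, l⟩, hx⟩ hj
    obtain rfl : j = i := (mem_filter.1 hj).2
    simp
  · intro m hm
    simp [Nat.add_sub_cancel' (mem_filter.1 hm).2]
  · intro a _
    rw [faceWeight_sq]
    push_cast
    ring

theorem two_mul_sum_Ico_add_one (N k : ℕ) :
    2 * ∑ m ∈ Ico N (N + k), ((m : ℝ) + 1) = k * (2 * N + k + 1) := by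
  induction k with
  | zero => simp
  | succ k ih =>
    rw [← add_assoc, sum_Ico_succ_top (by omega), mul_add, ih]
    push_cast
    ring

/-- **The triangle face mass matrix.**  For integers `-1 ≤ n < p`, the real symmetric
matrix `L` indexed by `S = {(i,j) ∈ ℕ² : n+1 ≤ i+j ≤ p}` with entries
`L (i,j) (k,l) = δ_{ik} (-1)^(j+l) √(i+j+1) √(k+l+1)`
(obtained by restricting the Proriol–Koornwinder–Dubiner orthonormal basis of `ℙ_p` on
the reference triangle to the edge `s = -1` and discarding all modes of total degree at
most `n`) is positive semidefinite and its largest eigenvalue (equivalently, its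
spectral radius) equals `(p-n)(p+n+3)/2`. -/
theorem triangle_face_mass_matrix_spectrum
    (p n : ℤ) (hn : -1 ≤ n) (hnp : n < p)
    (S : Set (ℕ × ℕ))
    (hS : S = {x | n + 1 ≤ ((x.1 + x.2 : ℕ) : ℤ) ∧ ((x.1 + x.2 : ℕ) : ℤ) ≤ p})
    [Fintype S]
    (L : Matrix S S ℝ)
    (hL : ∀ a b : S,
      L a b = (if (a : ℕ × ℕ).1 = (b : ℕ × ℕ).1 then (1 : ℝ) else 0) *
        (-1 : ℝ) ^ ((a : ℕ × ℕ).2 + (b : ℕ × ℕ).2) *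
        Real.sqrt (((a : ℕ × ℕ).1 : ℝ) + ((a : ℕ × ℕ).2 : ℝ) + 1) *
        Real.sqrt (((b : ℕ × ℕ).1 : ℝ) + ((b : ℕ × ℕ).2 : ℝ) + 1)) :
    L.PosSemidef ∧
      (((p - n) * (p + n + 3) : ℤ) : ℝ) / 2 ∈ spectrum ℝ L ∧
      ∀ μ ∈ spectrum ℝ L, μ ≤ (((p - n) * (p + n + 3) : ℤ) : ℝ) / 2 := by
  obtain ⟨N, hN⟩ : ∃ N : ℕ, (N : ℤ) = n + 1 := ⟨(n + 1).toNat, by omega⟩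
  obtain ⟨k, hk⟩ : ∃ k : ℕ, (k : ℤ) = p - n := ⟨(p - n).toNat, by omega⟩
  have hS' : ∀ x : ℕ × ℕ, x ∈ S ↔ x.1 + x.2 ∈ Ico N (N + k) := by
    intro x
    rw [hS, mem_Ico, Set.mem_ofPred_eq]
    omega
  have hL' : L = blockRankOne (fun a : S => a.1.1) (fun a => faceWeight a) := by
    ext a b
    rw [hL, blockRankOne, of_apply, faceWeight, faceWeight, pow_add]
    split_ifs <;> ring
  have htop : ∑ a : S with a.1.1 = 0, faceWeight a ^ 2 =
      (((p - n) * (p + n + 3) : ℤ) : ℝ) / 2 := by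
    have hk2N : (p - n) * (p + n + 3) = (k * (2 * N + k + 1) : ℤ) := by rw [hk, hN]; ring
    rw [sum_fiber_faceWeight_sq hS', filter_true_of_mem fun m _ => m.zero_le,
      eq_div_iff two_ne_zero, mul_comm, two_mul_sum_Ico_add_one, hk2N]
    push_cast
    ring
  have hle : ∀ i, ∑ a : S with a.1.1 = i, faceWeight a ^ 2 ≤
      ∑ a : S with a.1.1 = 0, faceWeight a ^ 2 := by
    intro i
    rw [sum_fiber_faceWeight_sq hS', sum_fiber_faceWeight_sq hS']
    exact sum_le_sum_of_subset_of_nonneg (monotone_filter_right _ fun m _ _ => m.zero_le)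
      fun m _ _ => by positivity
  have hwitness : (0, N) ∈ S := (hS' _).2 (by rw [zero_add, mem_Ico]; omega)
  subst hL'
  rw [← htop]
  exact ⟨posSemidef_blockRankOne _ _,
    sum_fiber_sq_mem_spectrum_blockRankOne _ ⟨⟨_, hwitness⟩, rfl, faceWeight_ne_zero _⟩,
    fun μ => le_of_mem_spectrum_of_dotProduct_mulVec_le
      (dotProduct_blockRankOne_mulVec_le _ hle)⟩
end
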